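/- In Cl(15,0), the identity e_{89ABCDEF}·Φ_O = Φ_P holds, where Φ_O = e_{12389AB} + e_{14589CD} + e_{16789EF} + e_{2468ACE} + e_{2578ADF} + e_{3478BCF} + e_{3568BDE} and Φ_P = e_{123CDEF} + e_{145ABEF} + e_{167ABCD} + e_{2469BDF} + e_{2579BCE} + e_{3479ADE} + e_{3569ACF}. -/

import Mathlib

/-!
Both sides are sums of seven basis blades, and the identity holds blade by blade: each blade of
`Φ_O` shares exactly four generators with `e_{89ABCDEF}`, these cancel since `e_i² = 1`, and
sorting the remaining seven anticommuting generators leaves the matching blade of `Φ_P` with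
sign `+1`.
-/

noncomputable def Q15 : QuadraticForm ℝ (Fin 15 → ℝ) :=
  QuadraticMap.weightedSumSquares ℝ (fun _ : Fin 15 => (1 : ℝ))

noncomputable def e15 (i : Fin 15) : CliffordAlgebra Q15 :=
  CliffordAlgebra.ι Q15 (Pi.single i 1)

/-- Product of generators with the given (0-based) indices;
hexadecimal index k of the paper corresponds to k-1 here. -/
noncomputable def p15 (l : List (Fin 15)) : CliffordAlgebra Q15 := (l.map e15).prod

/-- Φ_A = e1234567. -/
noncomputable def ΦA : CliffordAlgebra Q15 := p15 [0,1,2,3,4,5,6]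

/-- Φ_O = e_{12389AB} + e_{14589CD} + e_{16789EF} + e_{2468ACE} + e_{2578ADF}
  + e_{3478BCF} + e_{3568BDE}. -/
noncomputable def ΦO : CliffordAlgebra Q15 :=
  p15 [0,1,2,7,8,9,10] + p15 [0,3,4,7,8,11,12] + p15 [0,5,6,7,8,13,14]
    + p15 [1,3,5,7,9,11,13] + p15 [1,4,6,7,9,12,14] + p15 [2,3,6,7,10,11,14]
    + p15 [2,4,5,7,10,12,13]

/-- Φ_P = e_{123CDEF} + e_{145ABEF} + e_{167ABCD} + e_{2469BDF} + e_{2579BCE}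
  + e_{3479ADE} + e_{3569ACF}. -/
noncomputable def ΦP : CliffordAlgebra Q15 :=
  p15 [0,1,2,11,12,13,14] + p15 [0,3,4,9,10,13,14] + p15 [0,5,6,9,10,11,12]
    + p15 [1,3,5,8,10,12,14] + p15 [1,4,6,8,10,11,13] + p15 [2,3,6,8,9,12,13]
    + p15 [2,4,5,8,9,11,14]

/-- The pseudoscalar e_{123456789ABCDEF}. -/
noncomputable def ω15 : CliffordAlgebra Q15 :=
  p15 [0,1,2,3,4,5,6,7,8,9,10,11,12,13,14]

namespace QuadraticMap

variable {R ι : Type*} [CommSemiring R] [Fintype ι] [DecidableEq ι] (w : ι → R)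

theorem weightedSumSquares_single (i : ι) :
    weightedSumSquares R w (Pi.single i 1) = w i := by
  rw [weightedSumSquares_apply, Finset.sum_eq_single i] <;> simp +contextual

theorem isOrtho_weightedSumSquares_single {i j : ι} (h : i ≠ j) :
    (weightedSumSquares R w).IsOrtho (Pi.single i 1) (Pi.single j 1) := by
  simp only [isOrtho_def, weightedSumSquares_apply, ← Finset.sum_add_distrib]
  refine Finset.sum_congr rfl fun k _ => ?_
  by_cases hi : k = i <;> by_cases hj : k = j <;> simp_all

end QuadraticMap

theorem Q15_single (i : Fin 15) : Q15 (Pi.single i 1) = 1 :=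
  QuadraticMap.weightedSumSquares_single _ i

theorem e15_mul_e15_mul (i : Fin 15) (x : CliffordAlgebra Q15) : e15 i * (e15 i * x) = x := by
  rw [← mul_assoc, e15, CliffordAlgebra.ι_sq_scalar, Q15_single, map_one, one_mul]

theorem e15_mul_e15_mul_of_lt {i j : Fin 15} (h : j < i) (x : CliffordAlgebra Q15) :
    e15 i * (e15 j * x) = -(e15 j * (e15 i * x)) :=
  CliffordAlgebra.ι_mul_ι_mul_of_isOrtho x
    (QuadraticMap.isOrtho_weightedSumSquares_single _ h.ne')

theorem stmt18 : p15 [7,8,9,10,11,12,13,14] * ΦO = ΦP := by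
  simp only [ΦO, ΦP, mul_add, p15, List.map_cons, List.map_nil, List.prod_cons, List.prod_nil,
    mul_assoc, one_mul, e15_mul_e15_mul, e15_mul_e15_mul_of_lt, mul_neg, neg_neg, Fin.reduceLT]
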